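/- Let (M,g) be a 2-step Carnot group with the notation above, and consider the phase function φ(t,x,u,ξ,μ) := (x - xᵗ)·ξᵗ + (u - uᵗ)·μ + (i/4)⟨|J_μ|(x - xᵗ), x - xᵗ⟩, where (xᵗ,uᵗ,ξᵗ,μ) is the Hamiltonian flow of H = |ξ + J_μ x/2| starting at (0,0,ξ,μ). Then the mixed Hessian Φ := ∂_{(ξ,μ)} ∇_{(x,u)} φ is block upper-triangular of the form [[Φ₀, *],[0, I]] with Φ₀ = ∂_ξ ξᵗ - (i/2)|J_μ| ∂_ξ xᵗ independent of (x,u), and hence det Φ = det Φ₀. -/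

import Mathlib

open Matrix Function

/-- The (1-homogeneous) Hamiltonian `ℋ(x, u, ξ, μ) = |ξ + J_μ x / 2|`, the square root of
the principal symbol of the sub-Laplacian on a 2-step Carnot group; it is independent of
`u`, but `u` is kept as a formal argument. -/
noncomputable def sqrtHam {d₁ d₂ : ℕ} (J : (Fin d₂ → ℝ) →ₗ[ℝ] Matrix (Fin d₁) (Fin d₁) ℝ)
    (x : Fin d₁ → ℝ) (_u : Fin d₂ → ℝ) (ξ : Fin d₁ → ℝ) (μ : Fin d₂ → ℝ) : ℝ :=
  Real.sqrt ((ξ + (1 / 2 : ℝ) • (J μ).mulVec x) ⬝ᵥ (ξ + (1 / 2 : ℝ) • (J μ).mulVec x))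

/-- The complex phase function
`φ(t,x,u,ξ,μ) = (x - xᵗ)·ξᵗ + (u - uᵗ)·μ + (i/4)⟨|J_μ|(x - xᵗ), x - xᵗ⟩`,
where `K μ = |J_μ|` and `(xT, uT, ξT)` are the components of the Hamiltonian flow
starting at the origin with covector `(ξ, μ)`. -/
noncomputable def phaseFn {d₁ d₂ : ℕ} (K : (Fin d₂ → ℝ) → Matrix (Fin d₁) (Fin d₁) ℝ)
    (xT : ℝ → (Fin d₁ → ℝ) → (Fin d₂ → ℝ) → Fin d₁ → ℝ)
    (uT : ℝ → (Fin d₁ → ℝ) → (Fin d₂ → ℝ) → Fin d₂ → ℝ)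
    (ξT : ℝ → (Fin d₁ → ℝ) → (Fin d₂ → ℝ) → Fin d₁ → ℝ)
    (t : ℝ) (x : Fin d₁ → ℝ) (u : Fin d₂ → ℝ) (ξ : Fin d₁ → ℝ) (μ : Fin d₂ → ℝ) : ℂ :=
  (((x - xT t ξ μ) ⬝ᵥ ξT t ξ μ : ℝ) : ℂ) + (((u - uT t ξ μ) ⬝ᵥ μ : ℝ) : ℂ)
    + (Complex.I / 4) * (((K μ).mulVec (x - xT t ξ μ) ⬝ᵥ (x - xT t ξ μ) : ℝ) : ℂ)

/-! Since `∇_u φ = μ` does not involve `ξ`, the lower blocks of `Φ` are `0` and `I`. Since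
`|J_μ|` is symmetric, `∇_x φ = ξᵗ + (i/2)|J_μ|(x - xᵗ)`, whose `ξ`-derivative is
`∂_ξ ξᵗ - (i/2)|J_μ| ∂_ξ xᵗ`. A block upper-triangular matrix with identity corner has the
determinant of its top-left block. -/

section DotProduct

variable {𝕜 ι : Type*} [NontriviallyNormedField 𝕜] [Fintype ι]
  {f g : 𝕜 → ι → 𝕜} {f' g' : ι → 𝕜} {t : 𝕜}

theorem HasDerivAt.dotProduct (hf : HasDerivAt f f' t) (hg : HasDerivAt g g' t) :
    HasDerivAt (fun s => f s ⬝ᵥ g s) (f' ⬝ᵥ g t + f t ⬝ᵥ g') t := by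
  rw [hasDerivAt_pi] at hf hg
  simpa only [_root_.dotProduct, ← Finset.sum_add_distrib] using
    HasDerivAt.fun_sum (u := Finset.univ) fun i _ => (hf i).fun_mul (hg i)

theorem HasDerivAt.mulVec (A : Matrix ι ι 𝕜) (hf : HasDerivAt f f' t) :
    HasDerivAt (fun s => A *ᵥ f s) (A *ᵥ f') t :=
  hasDerivAt_pi.mpr fun i => by
    have := (hasDerivAt_const t (A i)).dotProduct hf
    simp only [zero_dotProduct, zero_add] at this
    exact this

theorem HasDerivAt.mulVec_dotProduct_self {A : Matrix ι ι 𝕜} (hA : Aᵀ = A)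
    (hf : HasDerivAt f f' t) :
    HasDerivAt (fun s => A *ᵥ f s ⬝ᵥ f s) (2 * (A *ᵥ f t ⬝ᵥ f')) t := by
  convert (hf.mulVec A).dotProduct hf using 1
  rw [two_mul, dotProduct_comm (A *ᵥ f'), dotProduct_mulVec, ← mulVec_transpose, hA]

end DotProduct

section PiCalculus

variable {𝕜 ι : Type*} [NontriviallyNormedField 𝕜]

theorem hasDerivAt_pi_of_differentiableAt {X : 𝕜 → ι → 𝕜} {s : 𝕜}
    (hX : DifferentiableAt 𝕜 X s) :
    HasDerivAt X (fun c => deriv (fun s' => X s' c) s) s :=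
  hasDerivAt_pi.mpr fun c => (differentiableAt_pi.mp hX c).hasDerivAt

theorem DifferentiableAt.comp_update {F : Type*} [Fintype ι] [DecidableEq ι] [NormedAddCommGroup F]
    [NormedSpace 𝕜 F] {φ : (ι → 𝕜) → F} {x : ι → 𝕜} (hφ : DifferentiableAt 𝕜 φ x) (i : ι) :
    DifferentiableAt 𝕜 (fun s => φ (update x i s)) (x i) := by
  rw [← update_eq_self i x] at hφ
  exact hφ.comp _ (hasDerivAt_update x i _).differentiableAt

end PiCalculus

theorem Matrix.det_fromBlocks_eq_det_of_zero_of_one {m n R : Type*} [Fintype m] [Fintype n]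
    [DecidableEq m] [DecidableEq n] [CommRing R] {A : Matrix m m R} {B : Matrix m n R}
    {C : Matrix n m R} {D : Matrix n n R} (hC : ∀ i j, C i j = 0)
    (hD : ∀ i j, D i j = if i = j then 1 else 0) :
    (fromBlocks A B C D).det = A.det := by
  obtain rfl : C = 0 := ext hC
  obtain rfl : D = 1 := ext fun i j => (hD i j).trans one_apply.symm
  rw [det_fromBlocks_zero₂₁, det_one, mul_one]

section PhaseFn

variable {d₁ d₂ : ℕ} (K : (Fin d₂ → ℝ) → Matrix (Fin d₁) (Fin d₁) ℝ)
  (xT : ℝ → (Fin d₁ → ℝ) → (Fin d₂ → ℝ) → Fin d₁ → ℝ)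
  (uT : ℝ → (Fin d₁ → ℝ) → (Fin d₂ → ℝ) → Fin d₂ → ℝ)
  (ξT : ℝ → (Fin d₁ → ℝ) → (Fin d₂ → ℝ) → Fin d₁ → ℝ)
  (t : ℝ) (x : Fin d₁ → ℝ) (u : Fin d₂ → ℝ) (ξ : Fin d₁ → ℝ) (μ : Fin d₂ → ℝ)

theorem deriv_phaseFn_update_u (l : Fin d₂) :
    deriv (fun s => phaseFn K xT uT ξT t x (update u l s) ξ μ) (u l) = μ l := by
  have h := (((hasDerivAt_update u l (u l)).sub_const (uT t ξ μ)).dotProduct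
    (hasDerivAt_const (u l) μ)).ofReal_comp
  simp only [single_dotProduct, one_mul, dotProduct_zero, add_zero] at h
  exact ((h.const_add _).add_const _).deriv

theorem hasDerivAt_phaseFn_update_x (hK : (K μ)ᵀ = K μ) (a : Fin d₁) :
    HasDerivAt (fun s => phaseFn K xT uT ξT t (update x a s) u ξ μ)
      (ξT t ξ μ a + Complex.I / 2 * ((K μ *ᵥ (x - xT t ξ μ)) a : ℂ)) (x a) := by
  have hy := (hasDerivAt_update x a (x a)).sub_const (xT t ξ μ)
  have hlin := (hy.dotProduct (hasDerivAt_const (x a) (ξT t ξ μ))).ofReal_comp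
  have hquad := ((hy.mulVec_dotProduct_self hK).ofReal_comp).const_mul (Complex.I / 4)
  simp only [single_dotProduct, one_mul, dotProduct_zero, add_zero, dotProduct_single,
    mul_one, update_eq_self] at hlin hquad
  refine ((hlin.add_const (((u - uT t ξ μ) ⬝ᵥ μ : ℝ) : ℂ)).fun_add hquad).congr_deriv ?_
  push_cast
  ring

theorem deriv_deriv_phaseFn_u_ξ (l : Fin d₂) (b : Fin d₁) :
    deriv (fun sb => deriv
      (fun sl => phaseFn K xT uT ξT t x (update u l sl) (update ξ b sb) μ) (u l)) (ξ b) = 0 := by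
  simp only [deriv_phaseFn_update_u, deriv_const]

theorem deriv_deriv_phaseFn_u_μ (l j : Fin d₂) :
    deriv (fun sj => deriv
      (fun sl => phaseFn K xT uT ξT t x (update u l sl) ξ (update μ j sj)) (u l)) (μ j)
      = if l = j then 1 else 0 := by
  simp only [deriv_phaseFn_update_u]
  rw [((hasDerivAt_pi.mp (hasDerivAt_update μ j (μ j)) l).ofReal_comp).deriv,
    Pi.single_apply]
  split_ifs <;> simp

theorem deriv_deriv_phaseFn_x_ξ (hK : (K μ)ᵀ = K μ)
    (hx : DifferentiableAt ℝ (fun ξ' => xT t ξ' μ) ξ)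
    (hξ : DifferentiableAt ℝ (fun ξ' => ξT t ξ' μ) ξ) (a b : Fin d₁) :
    deriv (fun sb => deriv
      (fun sa => phaseFn K xT uT ξT t (update x a sa) u (update ξ b sb) μ) (x a)) (ξ b)
      = ((deriv (fun sb => ξT t (update ξ b sb) μ a) (ξ b) : ℝ) : ℂ)
        - Complex.I / 2 * ∑ c, (K μ a c : ℂ) *
            ((deriv (fun sb => xT t (update ξ b sb) μ c) (ξ b) : ℝ) : ℂ) := by
  simp only [(hasDerivAt_phaseFn_update_x K xT uT ξT t x u _ μ hK a).deriv]
  have hX := hasDerivAt_pi_of_differentiableAt (𝕜 := ℝ) (hx.comp_update b)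
  have hΞ := hasDerivAt_pi.mp (hasDerivAt_pi_of_differentiableAt (𝕜 := ℝ) (hξ.comp_update b)) a
  have hKX := hasDerivAt_pi.mp ((hX.const_sub x).mulVec (K μ)) a
  rw [(hΞ.ofReal_comp.fun_add (hKX.ofReal_comp.const_mul (Complex.I / 2))).deriv]
  simp only [mulVec, _root_.dotProduct, Pi.neg_apply, mul_neg, Finset.sum_neg_distrib,
    Complex.ofReal_neg, Complex.ofReal_sum, Complex.ofReal_mul]
  ring

end PhaseFn

theorem statement12_general {d₁ d₂ : ℕ}
    (J : (Fin d₂ → ℝ) →ₗ[ℝ] Matrix (Fin d₁) (Fin d₁) ℝ)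
    (K : (Fin d₂ → ℝ) → Matrix (Fin d₁) (Fin d₁) ℝ)
    (hK : ∀ μ, (K μ).PosSemidef ∧ K μ * K μ = -(J μ * J μ))
    (xT : ℝ → (Fin d₁ → ℝ) → (Fin d₂ → ℝ) → Fin d₁ → ℝ)
    (uT : ℝ → (Fin d₁ → ℝ) → (Fin d₂ → ℝ) → Fin d₂ → ℝ)
    (ξT : ℝ → (Fin d₁ → ℝ) → (Fin d₂ → ℝ) → Fin d₁ → ℝ)
    (hdiff : ∀ (t : ℝ) (μ : Fin d₂ → ℝ) (ξ : Fin d₁ → ℝ), ξ ≠ 0 →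
      DifferentiableAt ℝ (fun ξ' => xT t ξ' μ) ξ ∧
      DifferentiableAt ℝ (fun ξ' => ξT t ξ' μ) ξ) :
    ∀ (t : ℝ) (x : Fin d₁ → ℝ) (u : Fin d₂ → ℝ) (ξ : Fin d₁ → ℝ) (μ : Fin d₂ → ℝ),
      ξ ≠ 0 →
      -- the bottom-left block `∂_ξ ∇_u φ` vanishes:
      (∀ (l : Fin d₂) (b : Fin d₁),
        deriv (fun sb => deriv
          (fun sl => phaseFn K xT uT ξT t x (update u l sl) (update ξ b sb) μ) (u l))
          (ξ b) = 0) ∧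
      -- the bottom-right block `∂_μ ∇_u φ` is the identity:
      (∀ l j : Fin d₂,
        deriv (fun sj => deriv
          (fun sl => phaseFn K xT uT ξT t x (update u l sl) ξ (update μ j sj)) (u l))
          (μ j) = if l = j then 1 else 0) ∧
      -- the top-left block `∂_ξ ∇_x φ` equals `Φ₀ = ∂_ξ ξᵗ - (i/2) |J_μ| ∂_ξ xᵗ`,
      -- which is independent of `(x, u)`:
      (∀ (a b : Fin d₁),
        deriv (fun sb => deriv
          (fun sa => phaseFn K xT uT ξT t (update x a sa) u (update ξ b sb) μ) (x a))
          (ξ b)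
        = ((deriv (fun sb => ξT t (update ξ b sb) μ a) (ξ b) : ℝ) : ℂ)
          - (Complex.I / 2) * ∑ c : Fin d₁,
              ((K μ a c : ℝ) : ℂ) *
                ((deriv (fun sb => xT t (update ξ b sb) μ c) (ξ b) : ℝ) : ℂ)) ∧
      -- consequently `det Φ = det Φ₀`:
      (Matrix.fromBlocks
          (Matrix.of fun (a : Fin d₁) (b : Fin d₁) =>
            deriv (fun sb => deriv
              (fun sa => phaseFn K xT uT ξT t (update x a sa) u (update ξ b sb) μ) (x a))
              (ξ b))
          (Matrix.of fun (a : Fin d₁) (j : Fin d₂) =>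
            deriv (fun sj => deriv
              (fun sa => phaseFn K xT uT ξT t (update x a sa) u ξ (update μ j sj)) (x a))
              (μ j))
          (Matrix.of fun (l : Fin d₂) (b : Fin d₁) =>
            deriv (fun sb => deriv
              (fun sl => phaseFn K xT uT ξT t x (update u l sl) (update ξ b sb) μ) (u l))
              (ξ b))
          (Matrix.of fun (l : Fin d₂) (j : Fin d₂) =>
            deriv (fun sj => deriv
              (fun sl => phaseFn K xT uT ξT t x (update u l sl) ξ (update μ j sj)) (u l))
              (μ j))).det
        = (Matrix.of fun (a b : Fin d₁) =>
            ((deriv (fun sb => ξT t (update ξ b sb) μ a) (ξ b) : ℝ) : ℂ)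
              - (Complex.I / 2) * ∑ c : Fin d₁,
                  ((K μ a c : ℝ) : ℂ) *
                    ((deriv (fun sb => xT t (update ξ b sb) μ c) (ξ b) : ℝ) : ℂ)).det := by
  intro t x u ξ μ hξ
  have hKsymm : (K μ)ᵀ = K μ := by
    simpa only [conjTranspose_eq_transpose_of_trivial] using (hK μ).1.isHermitian.eq
  have hC := deriv_deriv_phaseFn_u_ξ K xT uT ξT t x u ξ μ
  have hD := deriv_deriv_phaseFn_u_μ K xT uT ξT t x u ξ μ
  have hA := deriv_deriv_phaseFn_x_ξ K xT uT ξT t x u ξ μ hKsymm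
    (hdiff t μ ξ hξ).1 (hdiff t μ ξ hξ).2
  exact ⟨hC, hD, hA,
    (det_fromBlocks_eq_det_of_zero_of_one hC hD).trans (congrArg det (ext hA))⟩

/-- On a 2-step Carnot group, consider the complex phase
`φ(t,x,u,ξ,μ) = (x - xᵗ)·ξᵗ + (u - uᵗ)·μ + (i/4)⟨|J_μ|(x-xᵗ), x-xᵗ⟩`, where
`(xᵗ, uᵗ, ξᵗ, μ)` is the Hamiltonian flow of `ℋ = |ξ + J_μ x/2|` starting at
`(0, 0, ξ, μ)` (hypothesised below via Hamilton's equations, the initial conditions, and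
differentiability in `ξ`), and `K μ = |J_μ|` is the positive semidefinite square root of
`-(J μ)²`.  Then the mixed Hessian `Φ = ∂_{(ξ,μ)} ∇_{(x,u)} φ` is block upper-triangular
of the form `[[Φ₀, *], [0, I]]` with `Φ₀ = ∂_ξ ξᵗ - (i/2)|J_μ| ∂_ξ xᵗ` independent of
`(x, u)`, and hence `det Φ = det Φ₀`. -/
theorem statement12 {d₁ d₂ : ℕ}
    (J : (Fin d₂ → ℝ) →ₗ[ℝ] Matrix (Fin d₁) (Fin d₁) ℝ)
    (hskew : ∀ μ, (J μ)ᵀ = -(J μ))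
    (K : (Fin d₂ → ℝ) → Matrix (Fin d₁) (Fin d₁) ℝ)
    (hK : ∀ μ, (K μ).PosSemidef ∧ K μ * K μ = -(J μ * J μ))
    (xT : ℝ → (Fin d₁ → ℝ) → (Fin d₂ → ℝ) → Fin d₁ → ℝ)
    (uT : ℝ → (Fin d₁ → ℝ) → (Fin d₂ → ℝ) → Fin d₂ → ℝ)
    (ξT : ℝ → (Fin d₁ → ℝ) → (Fin d₂ → ℝ) → Fin d₁ → ℝ)
    (hInit : ∀ (ξ : Fin d₁ → ℝ) (μ : Fin d₂ → ℝ), ξ ≠ 0 →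
      xT 0 ξ μ = 0 ∧ uT 0 ξ μ = 0 ∧ ξT 0 ξ μ = ξ)
    (hHamx : ∀ (ξ : Fin d₁ → ℝ) (μ : Fin d₂ → ℝ), ξ ≠ 0 → ∀ (t : ℝ) (i : Fin d₁),
      HasDerivAt (fun s => xT s ξ μ i)
        (deriv (fun a => sqrtHam J (xT t ξ μ) (uT t ξ μ) (update (ξT t ξ μ) i a) μ)
          (ξT t ξ μ i)) t)
    (hHamu : ∀ (ξ : Fin d₁ → ℝ) (μ : Fin d₂ → ℝ), ξ ≠ 0 → ∀ (t : ℝ) (j : Fin d₂),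
      HasDerivAt (fun s => uT s ξ μ j)
        (deriv (fun a => sqrtHam J (xT t ξ μ) (uT t ξ μ) (ξT t ξ μ) (update μ j a))
          (μ j)) t)
    (hHamξ : ∀ (ξ : Fin d₁ → ℝ) (μ : Fin d₂ → ℝ), ξ ≠ 0 → ∀ (t : ℝ) (i : Fin d₁),
      HasDerivAt (fun s => ξT s ξ μ i)
        (-(deriv (fun a => sqrtHam J (update (xT t ξ μ) i a) (uT t ξ μ) (ξT t ξ μ) μ)
          (xT t ξ μ i))) t)
    (hdiff : ∀ (t : ℝ) (μ : Fin d₂ → ℝ) (ξ : Fin d₁ → ℝ), ξ ≠ 0 →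
      DifferentiableAt ℝ (fun ξ' => xT t ξ' μ) ξ ∧
      DifferentiableAt ℝ (fun ξ' => ξT t ξ' μ) ξ) :
    ∀ (t : ℝ) (x : Fin d₁ → ℝ) (u : Fin d₂ → ℝ) (ξ : Fin d₁ → ℝ) (μ : Fin d₂ → ℝ),
      ξ ≠ 0 →
      -- the bottom-left block `∂_ξ ∇_u φ` vanishes:
      (∀ (l : Fin d₂) (b : Fin d₁),
        deriv (fun sb => deriv
          (fun sl => phaseFn K xT uT ξT t x (update u l sl) (update ξ b sb) μ) (u l))
          (ξ b) = 0) ∧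
      -- the bottom-right block `∂_μ ∇_u φ` is the identity:
      (∀ l j : Fin d₂,
        deriv (fun sj => deriv
          (fun sl => phaseFn K xT uT ξT t x (update u l sl) ξ (update μ j sj)) (u l))
          (μ j) = if l = j then 1 else 0) ∧
      -- the top-left block `∂_ξ ∇_x φ` equals `Φ₀ = ∂_ξ ξᵗ - (i/2) |J_μ| ∂_ξ xᵗ`,
      -- which is independent of `(x, u)`:
      (∀ (a b : Fin d₁),
        deriv (fun sb => deriv
          (fun sa => phaseFn K xT uT ξT t (update x a sa) u (update ξ b sb) μ) (x a))
          (ξ b)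
        = ((deriv (fun sb => ξT t (update ξ b sb) μ a) (ξ b) : ℝ) : ℂ)
          - (Complex.I / 2) * ∑ c : Fin d₁,
              ((K μ a c : ℝ) : ℂ) *
                ((deriv (fun sb => xT t (update ξ b sb) μ c) (ξ b) : ℝ) : ℂ)) ∧
      -- consequently `det Φ = det Φ₀`:
      (Matrix.fromBlocks
          (Matrix.of fun (a : Fin d₁) (b : Fin d₁) =>
            deriv (fun sb => deriv
              (fun sa => phaseFn K xT uT ξT t (update x a sa) u (update ξ b sb) μ) (x a))
              (ξ b))
          (Matrix.of fun (a : Fin d₁) (j : Fin d₂) =>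
            deriv (fun sj => deriv
              (fun sa => phaseFn K xT uT ξT t (update x a sa) u ξ (update μ j sj)) (x a))
              (μ j))
          (Matrix.of fun (l : Fin d₂) (b : Fin d₁) =>
            deriv (fun sb => deriv
              (fun sl => phaseFn K xT uT ξT t x (update u l sl) (update ξ b sb) μ) (u l))
              (ξ b))
          (Matrix.of fun (l : Fin d₂) (j : Fin d₂) =>
            deriv (fun sj => deriv
              (fun sl => phaseFn K xT uT ξT t x (update u l sl) ξ (update μ j sj)) (u l))
              (μ j))).det
        = (Matrix.of fun (a b : Fin d₁) =>
            ((deriv (fun sb => ξT t (update ξ b sb) μ a) (ξ b) : ℝ) : ℂ)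
              - (Complex.I / 2) * ∑ c : Fin d₁,
                  ((K μ a c : ℝ) : ℂ) *
                    ((deriv (fun sb => xT t (update ξ b sb) μ c) (ξ b) : ℝ) : ℂ)).det :=
  statement12_general J K hK xT uT ξT hdiff
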